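/- Soundness of Q-resolution of clauses: let Π.ψ be a PCNF containing clauses C₁ ∪ {p} and C₂ ∪ {p̄} where p is existential in Π, p̄ ∉ C₁, p ∉ C₂, and C₁ ∪ C₂ contains no complementary pair of literals. Then Π.ψ is satisfiable if and only if Π.(ψ ∧ (C₁ ∪ C₂)) is satisfiable. -/
import Mathlib


/-- Variables are natural numbers. -/
abbrev Var := ℕ

/-- A literal is a variable together with a polarity. -/
abbrev Lit := Var × Bool

/-- Negation of a literal. -/
def Lit.negate (l : Lit) : Lit := (l.1, !l.2)

/-- A clause is a finite set of literals (interpreted disjunctively). -/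
abbrev Clause := Finset Lit

/-- A cube is a finite set of literals (interpreted conjunctively). -/
abbrev Cube := Finset Lit

/-- A CNF is a finite set of clauses. -/
abbrev Cnf := Finset Clause

/-- An assignment is a finite set of literals. -/
abbrev Assignment := Finset Lit

/-- An assignment contains no complementary pair of literals. -/
def Assignment.consistent (A : Assignment) : Prop := ∀ l ∈ A, Lit.negate l ∉ A

/-- A total assignment satisfies a literal. -/
def litSat (σ : Var → Bool) (l : Lit) : Prop := σ l.1 = l.2

/-- A total assignment satisfies a clause. -/
def clauseSat (σ : Var → Bool) (C : Clause) : Prop := ∃ l ∈ C, litSat σ l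

/-- A total assignment satisfies a CNF (is a propositional model). -/
def cnfSat (σ : Var → Bool) (ψ : Cnf) : Prop := ∀ C ∈ ψ, clauseSat σ C

/-- A total assignment satisfies a cube. -/
def cubeSat (σ : Var → Bool) (D : Cube) : Prop := ∀ l ∈ D, litSat σ l

/-- Restriction of a clause by an assignment: delete falsified literals. -/
def Clause.restrict (C : Clause) (A : Assignment) : Clause :=
  C.filter (fun l => Lit.negate l ∉ A)

/-- Restriction ψ[A] of a CNF by an assignment: remove satisfied clauses and
delete falsified literals from the remaining clauses. -/
def Cnf.restrict (ψ : Cnf) (A : Assignment) : Cnf :=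
  (ψ.filter (fun C => ∀ l ∈ A, l ∉ C)).image (fun C => Clause.restrict C A)

/-- Quantifiers. -/
inductive Quant | ex | all
deriving DecidableEq

/-- A quantifier prefix: a list of quantified variables (outermost first). -/
abbrev QPrefix := List (Quant × Var)

/-- Restriction of a prefix by an assignment: remove assigned variables. -/
def QPrefix.restrict (pre : QPrefix) (A : Assignment) : QPrefix :=
  pre.filter (fun q => q.2 ∉ A.image Prod.fst)

/-- Satisfiability of the PCNF `pre.ψ`, defined recursively over the prefix:
an existential variable needs one satisfiable branch, a universal variable
both; a quantifier-free CNF is satisfiable iff it is propositionally true. -/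
def qbfSat : QPrefix → Cnf → Prop
  | [], ψ => ∃ σ : Var → Bool, cnfSat σ ψ
  | (Quant.ex, x) :: pre, ψ =>
      qbfSat pre (Cnf.restrict ψ {(x, true)}) ∨ qbfSat pre (Cnf.restrict ψ {(x, false)})
  | (Quant.all, x) :: pre, ψ =>
      qbfSat pre (Cnf.restrict ψ {(x, true)}) ∧ qbfSat pre (Cnf.restrict ψ {(x, false)})


lemma clause_restrict_mono {C D : Clause} (h : C ⊆ D) (A : Assignment) :
    C.restrict A ⊆ D.restrict A := Finset.filter_subset_filter _ h

lemma cnf_restrict_mono {ψ ψ' : Cnf} (h : ψ ⊆ ψ') (A : Assignment) :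
    Cnf.restrict ψ A ⊆ Cnf.restrict ψ' A :=
  Finset.image_subset_image (Finset.filter_subset_filter _ h)

lemma mem_cnf_restrict {C : Clause} {ψ : Cnf} (hC : C ∈ ψ) (A : Assignment)
    (h : ∀ l ∈ A, l ∉ C) : C.restrict A ∈ ψ.restrict A :=
  Finset.mem_image_of_mem _ (Finset.mem_filter.2 ⟨hC, h⟩)

lemma restrict_insert_of_sat {C : Clause} {ψ : Cnf} {A : Assignment}
    (h : ∃ l ∈ A, l ∈ C) : Cnf.restrict (insert C ψ) A = Cnf.restrict ψ A := by
  unfold Cnf.restrict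
  rw [Finset.filter_insert, if_neg]
  push_neg
  exact h

lemma restrict_insert_of_not_sat {C : Clause} {ψ : Cnf} {A : Assignment}
    (h : ∀ l ∈ A, l ∉ C) :
    Cnf.restrict (insert C ψ) A = insert (C.restrict A) (Cnf.restrict ψ A) := by
  unfold Cnf.restrict
  rw [Finset.filter_insert, if_pos h, Finset.image_insert]

lemma clause_restrict_union (C D : Clause) (A : Assignment) :
    (C ∪ D).restrict A = C.restrict A ∪ D.restrict A := Finset.filter_union _ _ _

lemma qbf_mono : ∀ (pre : QPrefix) {ψ ψ' : Cnf}, ψ ⊆ ψ' → qbfSat pre ψ' → qbfSat pre ψ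
  | [], ψ, ψ', h, ⟨σ, hσ⟩ => ⟨σ, fun C hC => hσ C (h hC)⟩
  | (Quant.ex, _) :: pre, _, _, h, H =>
      H.imp (qbf_mono pre (cnf_restrict_mono h _)) (qbf_mono pre (cnf_restrict_mono h _))
  | (Quant.all, _) :: pre, _, _, h, H =>
      ⟨qbf_mono pre (cnf_restrict_mono h _) H.1, qbf_mono pre (cnf_restrict_mono h _) H.2⟩

lemma qbf_subsume (pre : QPrefix) : ∀ {ψ : Cnf} {D E : Clause},
    D ∈ ψ → D ⊆ E → qbfSat pre ψ → qbfSat pre (insert E ψ) := by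
  induction pre with
  | nil =>
    rintro ψ D E hD hDE ⟨σ, hσ⟩
    refine ⟨σ, fun C hC => ?_⟩
    rcases Finset.mem_insert.1 hC with rfl | hC
    · obtain ⟨l, hl, hsat⟩ := hσ D hD
      exact ⟨l, hDE hl, hsat⟩
    · exact hσ C hC
  | cons q pre ih =>
    rintro ψ D E hD hDE H
    obtain ⟨qq, x⟩ := q
    have step : ∀ b, qbfSat pre (Cnf.restrict ψ {(x, b)}) →
        qbfSat pre (Cnf.restrict (insert E ψ) {(x, b)}) := by
      intro b h
      by_cases hs : (x, b) ∈ E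
      · rw [restrict_insert_of_sat ⟨(x, b), Finset.mem_singleton_self _, hs⟩]
        exact h
      · have hDs : ∀ l ∈ ({(x, b)} : Assignment), l ∉ E := by
          intro l hl
          rw [Finset.mem_singleton] at hl; subst hl; exact hs
        rw [restrict_insert_of_not_sat hDs]
        exact ih (mem_cnf_restrict hD _ (fun l hl hlD => hDs l hl (hDE hlD)))
          (clause_restrict_mono hDE _) h
    cases qq with
    | ex => exact H.imp (step true) (step false)
    | all => exact ⟨step true H.1, step false H.2⟩

lemma qres_key (p : Lit) : ∀ (pre : QPrefix) {ψ : Cnf} {C1 C2 : Clause},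
    insert p C1 ∈ ψ → insert (Lit.negate p) C2 ∈ ψ →
    Lit.negate p ∉ C1 → p ∉ C2 →
    qbfSat pre ψ → qbfSat pre (insert (C1 ∪ C2) ψ) := by
  intro pre
  induction pre with
  | nil =>
    rintro ψ C1 C2 h1 h2 hp1 hp2 ⟨σ, hσ⟩
    refine ⟨σ, fun C hC => ?_⟩
    rcases Finset.mem_insert.1 hC with rfl | hC
    · obtain ⟨l1, hl1, hs1⟩ := hσ _ h1
      rcases Finset.mem_insert.1 hl1 with rfl | hl1
      · obtain ⟨l2, hl2, hs2⟩ := hσ _ h2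
        rcases Finset.mem_insert.1 hl2 with rfl | hl2
        · exfalso
          simp only [litSat, Lit.negate] at hs1 hs2
          rw [hs1] at hs2
          simp at hs2
        · exact ⟨l2, Finset.mem_union_right _ hl2, hs2⟩
      · exact ⟨l1, Finset.mem_union_left _ hl1, hs1⟩
    · exact hσ C hC
  | cons q pre ih =>
    rintro ψ C1 C2 h1 h2 hp1 hp2 H
    obtain ⟨qq, x⟩ := q
    have step : ∀ b, qbfSat pre (Cnf.restrict ψ {(x, b)}) →
        qbfSat pre (Cnf.restrict (insert (C1 ∪ C2) ψ) {(x, b)}) := by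
      intro b h
      by_cases hR : (x, b) ∈ C1 ∪ C2
      · rw [restrict_insert_of_sat ⟨_, Finset.mem_singleton_self _, hR⟩]; exact h
      · have hRs : ∀ l ∈ ({(x, b)} : Assignment), l ∉ C1 ∪ C2 := by
          intro l hl; rw [Finset.mem_singleton] at hl; subst hl; exact hR
        have hR1 : (x, b) ∉ C1 := fun hh => hR (Finset.mem_union_left _ hh)
        have hR2 : (x, b) ∉ C2 := fun hh => hR (Finset.mem_union_right _ hh)
        rw [restrict_insert_of_not_sat hRs, clause_restrict_union]
        by_cases hx : x = p.1
        · subst hx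
          by_cases hb : b = p.2
          · subst hb
            have hno2 : ∀ l ∈ ({(p.1, p.2)} : Assignment), l ∉ insert (Lit.negate p) C2 := by
              intro l hl
              rw [Finset.mem_singleton] at hl; subst hl
              intro hmem
              rcases Finset.mem_insert.1 hmem with he | hm
              · have := congrArg Prod.snd he
                simp [Lit.negate] at this
              · exact hp2 hm
            have hD := mem_cnf_restrict h2 {(p.1, p.2)} hno2
            have heq : (insert (Lit.negate p) C2).restrict {(p.1, p.2)}
                = C2.restrict {(p.1, p.2)} := by
              unfold Clause.restrict
              rw [Finset.filter_insert, if_neg]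
              simp [Lit.negate]
            rw [heq] at hD
            exact qbf_subsume pre hD Finset.subset_union_right h
          · have hb' : b = !p.2 := by cases b <;> cases hpb : p.2 <;> simp_all
            subst hb'
            have hno1 : ∀ l ∈ ({(p.1, !p.2)} : Assignment), l ∉ insert p C1 := by
              intro l hl
              rw [Finset.mem_singleton] at hl; subst hl
              intro hmem
              rcases Finset.mem_insert.1 hmem with he | hm
              · have := congrArg Prod.snd he
                simp at this
              · exact hp1 hm
            have hD := mem_cnf_restrict h1 {(p.1, !p.2)} hno1
            have heq : (insert p C1).restrict {(p.1, !p.2)}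
                = C1.restrict {(p.1, !p.2)} := by
              unfold Clause.restrict
              rw [Finset.filter_insert, if_neg]
              simp [Lit.negate]
            rw [heq] at hD
            exact qbf_subsume pre hD Finset.subset_union_left h
        · have hno1 : ∀ l ∈ ({(x, b)} : Assignment), l ∉ insert p C1 := by
            intro l hl
            rw [Finset.mem_singleton] at hl; subst hl
            intro hmem
            rcases Finset.mem_insert.1 hmem with he | hm
            · exact hx (congrArg Prod.fst he)
            · exact hR1 hm
          have hno2 : ∀ l ∈ ({(x, b)} : Assignment), l ∉ insert (Lit.negate p) C2 := by
            intro l hl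
            rw [Finset.mem_singleton] at hl; subst hl
            intro hmem
            rcases Finset.mem_insert.1 hmem with he | hm
            · exact hx (congrArg Prod.fst he)
            · exact hR2 hm
          have hD1 := mem_cnf_restrict h1 {(x, b)} hno1
          have hD2 := mem_cnf_restrict h2 {(x, b)} hno2
          have e1 : (insert p C1).restrict {(x, b)} = insert p (C1.restrict {(x, b)}) := by
            unfold Clause.restrict
            rw [Finset.filter_insert, if_pos]
            simp only [Finset.mem_singleton, Lit.negate]
            intro he
            exact hx (congrArg Prod.fst he).symm
          have e2 : (insert (Lit.negate p) C2).restrict {(x, b)}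
              = insert (Lit.negate p) (C2.restrict {(x, b)}) := by
            unfold Clause.restrict
            rw [Finset.filter_insert, if_pos]
            simp only [Finset.mem_singleton, Lit.negate, Bool.not_not]
            intro he
            exact hx (congrArg Prod.fst he).symm
          rw [e1] at hD1
          rw [e2] at hD2
          have hp1' : Lit.negate p ∉ C1.restrict {(x, b)} := by
            intro hh
            exact hp1 (Finset.mem_of_mem_filter _ hh)
          have hp2' : p ∉ C2.restrict {(x, b)} := by
            intro hh
            exact hp2 (Finset.mem_of_mem_filter _ hh)
          exact ih hD1 hD2 hp1' hp2' h
    cases qq with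
    | ex => exact H.imp (step true) (step false)
    | all => exact ⟨step true H.1, step false H.2⟩

/-- Soundness of Q-resolution of clauses: adding the non-tautological
resolvent `C₁ ∪ C₂` of clauses `C₁ ∪ {p}` and `C₂ ∪ {¬p}` of the matrix, with
existential pivot `p`, preserves QBF satisfiability. -/
theorem q_resolution_sound
    (pre : QPrefix) (ψ : Cnf) (C1 C2 : Clause) (p : Lit)
    (h1 : insert p C1 ∈ ψ)
    (h2 : insert (Lit.negate p) C2 ∈ ψ)
    (hex : (Quant.ex, p.1) ∈ pre)
    (hp1 : Lit.negate p ∉ C1)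
    (hp2 : p ∉ C2)
    (hnontaut : ∀ m ∈ C1 ∪ C2, Lit.negate m ∉ C1 ∪ C2) :
    qbfSat pre ψ ↔ qbfSat pre (insert (C1 ∪ C2) ψ) := by
  exact ⟨qres_key p pre h1 h2 hp1 hp2, qbf_mono pre (Finset.subset_insert _ _)⟩
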